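/- arXiv:2006.08541 — 2 statements merged into one kernel-verified Lean document; each statement's English description precedes it below -/
import Mathlib

section
/- Let k₁, k₂ ≥ 0, set ρ = k₁/2 + k₂, and suppose λ, μ ∈ ℝ with |λ| > |μ|. Let F_λ and F_μ be the solutions on ℝ of the ODE F'' (x) + (k₁ coth(x/2) + 2 k₂ coth(x)) F'(x) + (ρ² − λ²) F(x) = 0 (respectively with μ in place of λ), smooth at 0, even, and normalized by F(0) = 1, F'(0) = 0. Then F_λ(x) ≥ F_μ(x) for all x ∈ ℝ, with equality only at x = 0. -/
open Real Set

noncomputable def hodelta (k₁ k₂ : ℝ) (x : ℝ) : ℝ :=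
  Real.sinh (x / 2) ^ (2 * k₁) * Real.sinh x ^ (2 * k₂)

lemma hodelta_pos (k₁ k₂ : ℝ) {x : ℝ} (hx : 0 < x) : 0 < hodelta k₁ k₂ x :=
  mul_pos (Real.rpow_pos_of_pos (Real.sinh_pos_iff.mpr (by linarith)) _)
    (Real.rpow_pos_of_pos (Real.sinh_pos_iff.mpr hx) _)

lemma coth_ge_one {t : ℝ} (ht : 0 < t) : 1 ≤ Real.cosh t / Real.sinh t := by
  rw [le_div_iff₀ (Real.sinh_pos_iff.mpr ht)]
  nlinarith [Real.sinh_lt_cosh t]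

lemma hodelta_hasDerivAt (k₁ k₂ : ℝ) {x : ℝ} (hx : 0 < x) :
    HasDerivAt (hodelta k₁ k₂)
      ((k₁ * (Real.cosh (x / 2) / Real.sinh (x / 2))
        + 2 * k₂ * (Real.cosh x / Real.sinh x)) * hodelta k₁ k₂ x) x := by
  have hs1 : 0 < Real.sinh (x / 2) := Real.sinh_pos_iff.mpr (by linarith)
  have hs2 : 0 < Real.sinh x := Real.sinh_pos_iff.mpr hx
  have h1 : HasDerivAt (fun y : ℝ => Real.sinh (y / 2)) (Real.cosh (x / 2) * (1 / 2)) x := by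
    have := (Real.hasDerivAt_sinh (x / 2)).comp x ((hasDerivAt_id x).div_const 2)
    simpa [Function.comp_def] using this
  have h2 : HasDerivAt (fun y : ℝ => Real.sinh (y / 2) ^ (2 * k₁))
      ((Real.cosh (x / 2) * (1 / 2)) * (2 * k₁) * Real.sinh (x / 2) ^ (2 * k₁ - 1)) x :=
    h1.rpow_const (Or.inl hs1.ne')
  have h3 : HasDerivAt (fun y : ℝ => Real.sinh y ^ (2 * k₂))
      (Real.cosh x * (2 * k₂) * Real.sinh x ^ (2 * k₂ - 1)) x :=
    (Real.hasDerivAt_sinh x).rpow_const (Or.inl hs2.ne')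
  have h4 := h2.mul h3
  have : HasDerivAt (hodelta k₁ k₂) _ x := h4
  convert this using 1
  unfold hodelta
  rw [show (2 * k₁ - 1) = 2 * k₁ - 1 from rfl]
  rw [Real.rpow_sub hs1, Real.rpow_sub hs2, Real.rpow_one, Real.rpow_one]
  field_simp

lemma hodelta_continuousOn (k₁ k₂ : ℝ) (hk₁ : 0 ≤ k₁) (hk₂ : 0 ≤ k₂) :
    ContinuousOn (hodelta k₁ k₂) (Set.Ici 0) := by
  apply ContinuousOn.mul
  · rcases eq_or_lt_of_le hk₁ with h | h
    · have : (fun x : ℝ => Real.sinh (x / 2) ^ (2 * k₁)) = fun _ : ℝ => 1 := by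
        funext y; rw [← h]; simp
      rw [this]; exact continuousOn_const
    · intro x _
      exact ((Real.continuousAt_rpow_const _ _ (Or.inr (by linarith))).comp
        ((Real.continuous_sinh.comp (continuous_id.div_const 2)).continuousAt)).continuousWithinAt
  · rcases eq_or_lt_of_le hk₂ with h | h
    · have : (fun x : ℝ => Real.sinh x ^ (2 * k₂)) = fun _ : ℝ => 1 := by
        funext y; rw [← h]; simp
      rw [this]; exact continuousOn_const
    · intro x _
      exact ((Real.continuousAt_rpow_const _ _ (Or.inr (by linarith))).comp
        (Real.continuous_sinh.continuousAt)).continuousWithinAt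

lemma pos_lemma (k₁ k₂ ν : ℝ) (hk₁ : 0 ≤ k₁) (hk₂ : 0 ≤ k₂)
    (P : ℝ → ℝ) (hPs : ContDiff ℝ (⊤ : ℕ∞) P)
    (hP0 : P 0 = 1) (hP0' : deriv P 0 = 0)
    (hode : ∀ x : ℝ, x ≠ 0 → deriv (deriv P) x
      + (k₁ * (Real.cosh (x / 2) / Real.sinh (x / 2))
          + 2 * k₂ * (Real.cosh x / Real.sinh x)) * deriv P x
      + ((k₁ / 2 + k₂) ^ 2 - ν ^ 2) * P x = 0) :
    ∀ x ≥ 0, 0 < P x := by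
  have hPs' : ContDiff ℝ (↑(⊤ : ℕ∞)) P := hPs.of_le (by simp)
  have hPd : Differentiable ℝ P := hPs'.differentiable (by simp)
  have hPd1c : ContDiff ℝ (↑(⊤ : ℕ∞)) (deriv P) := (contDiff_infty_iff_deriv.mp hPs').2
  have hPd1 : Differentiable ℝ (deriv P) := hPd1c.differentiable (by simp)
  by_contra hcon
  push_neg at hcon
  obtain ⟨x₀, hx₀, hPx₀⟩ := hcon
  set S : Set ℝ := {x | 0 ≤ x ∧ P x ≤ 0} with hS
  have hSne : S.Nonempty := ⟨x₀, hx₀, hPx₀⟩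
  have hSbdd : BddBelow S := ⟨0, fun x hx => hx.1⟩
  have hScl : IsClosed S := by
    have : S = {x : ℝ | 0 ≤ x} ∩ {x : ℝ | P x ≤ 0} := rfl
    rw [this]
    exact (isClosed_le continuous_const continuous_id).inter
      (isClosed_le hPd.continuous continuous_const)
  set z := sInf S with hzdef
  have hzS : z ∈ S := hScl.csInf_mem hSne hSbdd
  have hz0 : 0 < z := by
    rcases eq_or_lt_of_le hzS.1 with h | h
    · exfalso; have h2 := hzS.2; rw [← h, hP0] at h2; linarith
    · exact h
  have hPpos : ∀ x, 0 ≤ x → x < z → 0 < P x := by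
    intro x hx hxz
    by_contra hP
    push_neg at hP
    exact absurd (csInf_le hSbdd ⟨hx, hP⟩) (not_le.mpr hxz)
  set r : ℝ := max 0 ((k₁ / 2 + k₂) - |ν|) with hrdef
  have hr0 : 0 ≤ r := le_max_left _ _
  set E : ℝ → ℝ := fun x => Real.exp (-r * x) * hodelta k₁ k₂ x with hEdef
  have hEpos : ∀ x : ℝ, 0 < x → 0 < E x := fun x hx =>
    mul_pos (Real.exp_pos _) (hodelta_pos k₁ k₂ hx)
  set B : ℝ → ℝ := fun x => E x * (deriv P x + r * P x) with hBdef
  -- key algebraic inequality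
  have hkey : ∀ x : ℝ, 0 < x →
      0 ≤ ν ^ 2 - (k₁ / 2 + k₂) ^ 2
        + r * ((k₁ * (Real.cosh (x / 2) / Real.sinh (x / 2))
            + 2 * k₂ * (Real.cosh x / Real.sinh x)) - r) := by
    intro x hx
    have h1 : 1 ≤ Real.cosh (x / 2) / Real.sinh (x / 2) := coth_ge_one (by linarith)
    have h2 : 1 ≤ Real.cosh x / Real.sinh x := coth_ge_one hx
    have hb : k₁ + 2 * k₂ ≤ k₁ * (Real.cosh (x / 2) / Real.sinh (x / 2))
        + 2 * k₂ * (Real.cosh x / Real.sinh x) := by nlinarith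
    rcases le_or_gt (k₁ / 2 + k₂) |ν| with h | h
    · have hre : r = 0 := max_eq_left (by linarith)
      rw [hre]
      have : (k₁ / 2 + k₂) ^ 2 ≤ ν ^ 2 := by nlinarith [abs_nonneg ν, sq_abs ν]
      linarith
    · have hre : r = (k₁ / 2 + k₂) - |ν| := max_eq_right (by linarith)
      have e1 : ν ^ 2 - (k₁ / 2 + k₂) ^ 2 + r * (2 * (k₁ / 2 + k₂) - r) = 0 := by
        rw [hre, ← sq_abs ν]; ring
      have e2 : 0 ≤ r * ((k₁ * (Real.cosh (x / 2) / Real.sinh (x / 2))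
          + 2 * k₂ * (Real.cosh x / Real.sinh x)) - 2 * (k₁ / 2 + k₂)) :=
        mul_nonneg hr0 (by linarith)
      nlinarith [e1, e2]
  -- derivative of B
  have hBd : ∀ x : ℝ, 0 < x → HasDerivAt B
      ((P x * (ν ^ 2 - (k₁ / 2 + k₂) ^ 2
        + r * ((k₁ * (Real.cosh (x / 2) / Real.sinh (x / 2))
            + 2 * k₂ * (Real.cosh x / Real.sinh x)) - r))) * E x) x := by
    intro x hx
    have hδ := hodelta_hasDerivAt k₁ k₂ hx
    have hlin : HasDerivAt (fun y : ℝ => -r * y) (-r) x := by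
      simpa using (hasDerivAt_id x).const_mul (-r)
    have hexp : HasDerivAt (fun y : ℝ => Real.exp (-r * y))
        (Real.exp (-r * x) * (-r)) x := hlin.exp
    have hE' : HasDerivAt E
        (((k₁ * (Real.cosh (x / 2) / Real.sinh (x / 2))
          + 2 * k₂ * (Real.cosh x / Real.sinh x)) - r) * E x) x := by
      have : HasDerivAt (fun y => Real.exp (-r * y) * hodelta k₁ k₂ y) _ x := hexp.fun_mul hδ
      convert this using 1
      simp only [hEdef]
      ring
    have hP1 : HasDerivAt P (deriv P x) x := (hPd x).hasDerivAt
    have hP2 : HasDerivAt (deriv P) (deriv (deriv P) x) x := (hPd1 x).hasDerivAt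
    have hsum : HasDerivAt (fun y => deriv P y + r * P y)
        (deriv (deriv P) x + r * deriv P x) x := hP2.add (hP1.const_mul r)
    have hmul := hE'.mul hsum
    have : HasDerivAt B _ x := hmul
    convert this using 1
    have hode' := hode x (ne_of_gt hx)
    linear_combination (-(E x)) * hode'
  have hBcont : ContinuousOn B (Set.Icc 0 z) := by
    apply ContinuousOn.mul
    · exact ((Real.continuous_exp.comp (continuous_const.mul continuous_id)).continuousOn).mul
        ((hodelta_continuousOn k₁ k₂ hk₁ hk₂).mono (Set.Icc_subset_Ici_self))
    · exact (hPd1c.continuous.continuousOn).add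
        ((continuous_const.mul hPd.continuous).continuousOn)
  have hBmono : MonotoneOn B (Set.Icc 0 z) := by
    apply monotoneOn_of_deriv_nonneg (convex_Icc 0 z) hBcont
    · intro x hx
      rw [interior_Icc] at hx
      exact ((hBd x hx.1).differentiableAt).differentiableWithinAt
    · intro x hx
      rw [interior_Icc] at hx
      rw [(hBd x hx.1).deriv]
      exact mul_nonneg (mul_nonneg (hPpos x hx.1.le hx.2).le (hkey x hx.1))
        (hEpos x hx.1).le
  have hB0 : B 0 = 0 := by
    have hEB : B 0 = E 0 * r := by
      simp only [hBdef, hP0, hP0']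
      ring
    rw [hEB]
    rcases le_or_gt (k₁ / 2 + k₂) |ν| with h | h
    · have hre : r = 0 := max_eq_left (by linarith)
      rw [hre, mul_zero]
    · have hρ : 0 < k₁ / 2 + k₂ := lt_of_le_of_lt (abs_nonneg ν) h
      have hδ0 : hodelta k₁ k₂ 0 = 0 := by
        unfold hodelta
        rcases eq_or_lt_of_le hk₁ with hk | hk
        · have hk₂' : 0 < k₂ := by linarith [hk.symm ▸ hρ]
          rw [show (0:ℝ) / 2 = 0 by norm_num, Real.sinh_zero,
            Real.zero_rpow (by positivity : (2 * k₂ : ℝ) ≠ 0), mul_zero]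
        · rw [show (0:ℝ) / 2 = 0 by norm_num, Real.sinh_zero,
            Real.zero_rpow (by positivity : (2 * k₁ : ℝ) ≠ 0), zero_mul]
      simp only [hEdef, hδ0, mul_zero, zero_mul]
  have hA : ∀ x, 0 < x → x < z → 0 ≤ deriv P x + r * P x := by
    intro x h1 h2
    have hBx : 0 ≤ B x := by
      rw [← hB0]
      exact hBmono ⟨le_rfl, hz0.le⟩ ⟨h1.le, h2.le⟩ h1.le
    have hEx := hEpos x h1
    simp only [hBdef] at hBx
    nlinarith [hBx, hEx]
  -- now Q = exp(r x) * P x is monotone on [0, z]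
  have hQmono : MonotoneOn (fun x => Real.exp (r * x) * P x) (Set.Icc 0 z) := by
    have hQd : ∀ x : ℝ, HasDerivAt (fun y => Real.exp (r * y) * P y)
        (Real.exp (r * x) * (deriv P x + r * P x)) x := by
      intro x
      have hlin : HasDerivAt (fun y : ℝ => r * y) r x := by
        simpa using (hasDerivAt_id x).const_mul r
      have : HasDerivAt (fun y => Real.exp (r * y) * P y) _ x := (hlin.exp).fun_mul ((hPd x).hasDerivAt)
      convert this using 1
      ring
    apply monotoneOn_of_deriv_nonneg (convex_Icc 0 z)
    · exact ((Real.continuous_exp.comp (continuous_const.mul continuous_id)).mul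
        hPd.continuous).continuousOn
    · intro x hx
      exact ((hQd x).differentiableAt).differentiableWithinAt
    · intro x hx
      rw [interior_Icc] at hx
      rw [(hQd x).deriv]
      exact mul_nonneg (Real.exp_pos _).le (hA x hx.1 hx.2)
  have hfin : (1:ℝ) ≤ Real.exp (r * z) * P z := by
    have := hQmono ⟨le_rfl, hz0.le⟩ ⟨hz0.le, le_rfl⟩ hz0.le
    simpa [hP0] using this
  nlinarith [Real.exp_pos (r * z), hzS.2, hfin]

/-- Rank-one Heckman–Opdam comparison. Let `k₁, k₂ ≥ 0`,
`ρ = k₁/2 + k₂`, `|μ| < |λ|`, and let `F = F_λ`, `G = F_μ` be the smooth even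
solutions on `ℝ` of `F'' + (k₁ coth(x/2) + 2k₂ coth x) F' + (ρ² − λ²) F = 0`
(resp. with `μ`), normalized by `F(0) = 1`, `F'(0) = 0`.  Then `G ≤ F`
everywhere, with equality only at `x = 0`. -/
theorem stmt_8 (k₁ k₂ lam mu : ℝ) (hk₁ : 0 ≤ k₁) (hk₂ : 0 ≤ k₂)
    (hlm : |mu| < |lam|) (F G : ℝ → ℝ)
    (hFs : ContDiff ℝ (⊤ : ℕ∞) F) (hGs : ContDiff ℝ (⊤ : ℕ∞) G)
    (hFe : ∀ x, F (-x) = F x) (hGe : ∀ x, G (-x) = G x)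
    (hF0 : F 0 = 1) (hF0' : deriv F 0 = 0)
    (hG0 : G 0 = 1) (hG0' : deriv G 0 = 0)
    (hFode : ∀ x : ℝ, x ≠ 0 → deriv (deriv F) x
      + (k₁ * (Real.cosh (x / 2) / Real.sinh (x / 2))
          + 2 * k₂ * (Real.cosh x / Real.sinh x)) * deriv F x
      + ((k₁ / 2 + k₂) ^ 2 - lam ^ 2) * F x = 0)
    (hGode : ∀ x : ℝ, x ≠ 0 → deriv (deriv G) x
      + (k₁ * (Real.cosh (x / 2) / Real.sinh (x / 2))
          + 2 * k₂ * (Real.cosh x / Real.sinh x)) * deriv G x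
      + ((k₁ / 2 + k₂) ^ 2 - mu ^ 2) * G x = 0) :
    (∀ x : ℝ, G x ≤ F x) ∧ (∀ x : ℝ, x ≠ 0 → G x < F x) := by
  have hmulam : mu ^ 2 < lam ^ 2 := by
    nlinarith [abs_nonneg mu, abs_nonneg lam, sq_abs mu, sq_abs lam]
  -- differentiability facts
  have hFs' : ContDiff ℝ (↑(⊤ : ℕ∞)) F := hFs.of_le (by simp)
  have hGs' : ContDiff ℝ (↑(⊤ : ℕ∞)) G := hGs.of_le (by simp)
  have hFd : Differentiable ℝ F := hFs'.differentiable (by simp)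
  have hGd : Differentiable ℝ G := hGs'.differentiable (by simp)
  have hFd1c : ContDiff ℝ (↑(⊤ : ℕ∞)) (deriv F) := (contDiff_infty_iff_deriv.mp hFs').2
  have hGd1c : ContDiff ℝ (↑(⊤ : ℕ∞)) (deriv G) := (contDiff_infty_iff_deriv.mp hGs').2
  have hFd1 : Differentiable ℝ (deriv F) := hFd1c.differentiable (by simp)
  have hGd1 : Differentiable ℝ (deriv G) := hGd1c.differentiable (by simp)
  -- positivity
  have hFpos : ∀ x : ℝ, 0 < F x := by
    have h := pos_lemma k₁ k₂ lam hk₁ hk₂ F hFs hF0 hF0' hFode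
    intro x
    rcases le_or_gt 0 x with hx | hx
    · exact h x hx
    · have := h (-x) (by linarith)
      rwa [hFe x] at this
  have hGpos : ∀ x : ℝ, 0 < G x := by
    have h := pos_lemma k₁ k₂ mu hk₁ hk₂ G hGs hG0 hG0' hGode
    intro x
    rcases le_or_gt 0 x with hx | hx
    · exact h x hx
    · have := h (-x) (by linarith)
      rwa [hGe x] at this
  -- the weighted Wronskian ω
  set ω : ℝ → ℝ := fun x => hodelta k₁ k₂ x * (deriv G x * F x - G x * deriv F x) with hωdef
  have hωd : ∀ x : ℝ, 0 < x → HasDerivAt ω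
      ((mu ^ 2 - lam ^ 2) * (hodelta k₁ k₂ x * (G x * F x))) x := by
    intro x hx
    have hδ := hodelta_hasDerivAt k₁ k₂ hx
    have hF1 : HasDerivAt F (deriv F x) x := (hFd x).hasDerivAt
    have hF2 : HasDerivAt (deriv F) (deriv (deriv F) x) x := (hFd1 x).hasDerivAt
    have hG1 : HasDerivAt G (deriv G x) x := (hGd x).hasDerivAt
    have hG2 : HasDerivAt (deriv G) (deriv (deriv G) x) x := (hGd1 x).hasDerivAt
    have hin : HasDerivAt (fun y => deriv G y * F y - G y * deriv F y)
        ((deriv (deriv G) x * F x + deriv G x * deriv F x)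
          - (deriv G x * deriv F x + G x * deriv (deriv F) x)) x :=
      (hG2.mul hF1).sub (hG1.mul hF2)
    have hmul := hδ.mul hin
    have : HasDerivAt ω _ x := hmul
    convert this using 1
    have e1 := hFode x (ne_of_gt hx)
    have e2 := hGode x (ne_of_gt hx)
    linear_combination (hodelta k₁ k₂ x * G x) * e1 - (hodelta k₁ k₂ x * F x) * e2
  have hωanti : StrictAntiOn ω (Set.Ici 0) := by
    apply strictAntiOn_of_deriv_neg (convex_Ici 0)
    · exact (hodelta_continuousOn k₁ k₂ hk₁ hk₂).mul
        (((hGd1c.continuous.mul hFd.continuous).sub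
          (hGd.continuous.mul hFd1c.continuous)).continuousOn)
    · intro x hx
      rw [interior_Ici] at hx
      rw [(hωd x hx).deriv]
      have hpos : 0 < hodelta k₁ k₂ x * (G x * F x) :=
        mul_pos (hodelta_pos k₁ k₂ hx) (mul_pos (hGpos x) (hFpos x))
      exact mul_neg_of_neg_of_pos (by linarith) hpos
  have hω0 : ω 0 = 0 := by
    simp [hωdef, hF0, hF0', hG0, hG0']
  have hωneg : ∀ x : ℝ, 0 < x → ω x < 0 := by
    intro x hx
    have := hωanti (Set.self_mem_Ici) (Set.mem_Ici.mpr hx.le) hx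
    rwa [hω0] at this
  -- the ratio G/F is strictly decreasing on [0, ∞)
  have hq : StrictAntiOn (fun x => G x / F x) (Set.Ici 0) := by
    apply strictAntiOn_of_deriv_neg (convex_Ici 0)
    · exact (hGd.continuous.continuousOn).div (hFd.continuous.continuousOn)
        (fun x _ => (hFpos x).ne')
    · intro x hx
      rw [interior_Ici] at hx
      have hd : HasDerivAt (fun y => G y / F y)
          ((deriv G x * F x - G x * deriv F x) / (F x) ^ 2) x :=
        ((hGd x).hasDerivAt).div ((hFd x).hasDerivAt) (hFpos x).ne'
      rw [hd.deriv]
      apply div_neg_of_neg_of_pos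
      · have h1 := hωneg x hx
        have h2 := hodelta_pos k₁ k₂ hx
        simp only [hωdef] at h1
        nlinarith [h1, h2]
      · exact pow_pos (hFpos x) 2
  have hmain : ∀ x : ℝ, 0 < x → G x < F x := by
    intro x hx
    have h0 : G x / F x < G 0 / F 0 := hq (Set.self_mem_Ici) (Set.mem_Ici.mpr hx.le) hx
    rw [hG0, hF0] at h0
    have h1 : G x / F x < 1 := by simpa using h0
    exact (div_lt_one (hFpos x)).mp h1
  have hstrict : ∀ x : ℝ, x ≠ 0 → G x < F x := by
    intro x hx
    rcases lt_or_gt_of_ne hx with h | h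
    · have := hmain (-x) (by linarith)
      rwa [hGe x, hFe x] at this
    · exact hmain x h
  refine ⟨fun x => ?_, hstrict⟩
  rcases eq_or_ne x 0 with h | h
  · rw [h, hG0, hF0]
  · exact (hstrict x h).le
end

section
/- Let (Ω, P) be a probability space, A : Ω → V measurable into a finite-dimensional real inner product space V, with exp(⟨λ, A(·)⟩) integrable for all λ ∈ V. Let W be a finite group of orthogonal transformations of V, and suppose F(λ) = ∫_Ω exp(⟨λ, A(ω)⟩) dP(ω) is W-invariant. Then F is W-convex: if μ lies in the convex hull of {w·λ : w ∈ W}, then F(λ) ≥ F(μ). -/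
open MeasureTheory RealInnerProductSpace

/-- Let `(Ω, P)` be a probability space, `A : Ω → V` measurable
into a finite-dimensional real inner product space, with
`exp ⟪l, A ·⟫` integrable for all `l`.  Let the finite group `W` act on `V` by
linear isometries and suppose `F l = ∫ exp ⟪l, A ω⟫ dP` is `W`-invariant.
Then `F` is `W`-convex: `F m ≤ F l` whenever `m` lies in the convex hull of
the `W`-orbit of `l`. -/
theorem stmt_12
    {V : Type*} [NormedAddCommGroup V] [InnerProductSpace ℝ V] [FiniteDimensional ℝ V]
    [MeasurableSpace V] [BorelSpace V]
    {Ω : Type*} [MeasurableSpace Ω] (P : Measure Ω) [IsProbabilityMeasure P]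
    (A : Ω → V) (hA : Measurable A)
    (hint : ∀ l : V, Integrable (fun ω => Real.exp ⟪l, A ω⟫) P)
    {W : Type*} [Group W] [Finite W] (ρ : W →* (V ≃ₗᵢ[ℝ] V))
    (F : V → ℝ) (hF : ∀ l : V, F l = ∫ ω, Real.exp ⟪l, A ω⟫ ∂P)
    (hinv : ∀ (w : W) (l : V), F (ρ w l) = F l)
    (l m : V) (hmaj : m ∈ convexHull ℝ (Set.range fun w : W => ρ w l)) :
    F m ≤ F l := by
  have hconv : ConvexOn ℝ Set.univ F := by
    refine ⟨convex_univ, ?_⟩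
    intro x _ y _ a b ha hb hab
    rw [hF, hF, hF]
    have h1 := hint x
    have h2 := hint y
    calc ∫ ω, Real.exp ⟪a • x + b • y, A ω⟫ ∂P
        ≤ ∫ ω, (a * Real.exp ⟪x, A ω⟫ + b * Real.exp ⟪y, A ω⟫) ∂P := by
          apply integral_mono (hint _) ((h1.const_mul a).add (h2.const_mul b))
          intro ω
          simp only [Pi.add_apply]
          have h3 : ⟪a • x + b • y, A ω⟫ = a * ⟪x, A ω⟫ + b * ⟪y, A ω⟫ := by
            simp [inner_add_left, real_inner_smul_left]
          rw [h3]
          exact convexOn_exp.2 (Set.mem_univ _) (Set.mem_univ _) ha hb hab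
      _ = a • ∫ ω, Real.exp ⟪x, A ω⟫ ∂P + b • ∫ ω, Real.exp ⟪y, A ω⟫ ∂P := by
          simp only [smul_eq_mul]
          rw [integral_add (h1.const_mul a) (h2.const_mul b), integral_const_mul, integral_const_mul]
  have hconv' : ConvexOn ℝ (convexHull ℝ (Set.range fun w : W => ρ w l)) F :=
    hconv.subset (Set.subset_univ _) (convex_convexHull ℝ _)
  obtain ⟨y, hy, hle⟩ := hconv.exists_ge_of_mem_convexHull (Set.subset_univ _) hmaj
  obtain ⟨w, rfl⟩ := hy
  exact hle.trans_eq (hinv w l)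
end
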